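/- Let X be a separable real Banach space. Suppose there exist x₀*, y₀* ∈ X* with ‖x₀*‖ = ‖y₀*‖ = r > 0 and continuous functions φ, ψ : (0,∞) → (0,∞) with ψ(δ) < min{δ, φ(δ)} for all δ > 0, such that for every δ > 0: (i) there is a sequence (v_n*) in X* converging to 0 in the weak* topology with ‖v_n*‖ > δ for all n and ‖x₀* ± v_n*‖ ≤ r + ψ(δ) for all n and both signs; and (ii) for every sequence (u_n*) in X* converging to 0 in the weak* topology with ‖u_n*‖ > δ for all n, there exists m with ‖y₀* + u_m*‖ ≥ r + φ(δ). Then for every ε ∈ (0,2) there exist u*, v* ∈ X* with ‖u*‖ = ‖v*‖ such that u* ∈ s_ε B_{X*} and v* ∉ s_ε B_{X*}; in particular, s_ε B_{X*} is not a closed ball centered at the origin, for any ε ∈ (0,2). -/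

import Mathlib

/-!
Pick δ > 0 with `ε (r + ψ δ) = 2 δ` (intermediate value theorem) and put `c = r + ψ δ`; the
witnesses are `c⁻¹ x₀` and `c⁻¹ y₀`. The points `c⁻¹ (x₀ ± vₙ)` from (i) lie in the unit ball,
converge weak* to `c⁻¹ x₀` and are `2 c⁻¹ ‖vₙ‖ > ε` apart, so `c⁻¹ x₀` survives the derivation.
If `c⁻¹ y₀` survived, weak* metrizability of the dual ball of a separable space would give `wₙ`
in the ball converging weak* to `c⁻¹ y₀` with `‖wₙ - c⁻¹ y₀‖ > ε / 2`; then (ii) applied to the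
weak*-null sequence `c (wₙ - c⁻¹ y₀)` gives `r + φ δ ≤ ‖c wₘ‖ ≤ c = r + ψ δ`, contradicting
`ψ δ < φ δ`.
-/

open Filter Topology Metric

/-- The ε-Szlenk derivation of the closed dual unit ball of `X`. -/
def szlenkDeriv (X : Type*) [NormedAddCommGroup X] [NormedSpace ℝ X] (ε : ℝ) :
    Set (StrongDual ℝ X) :=
  {x : StrongDual ℝ X | ‖x‖ ≤ 1 ∧
    ∀ V : Set (StrongDual ℝ X),
      IsOpen ((StrongDual.toWeakDual '' V : Set (WeakDual ℝ X))) → x ∈ V →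
        ε < Metric.diam (Metric.closedBall (0 : StrongDual ℝ X) 1 ∩ V)}

/-- A sequence in the dual is weak*-null if it tends to `0` in the weak* topology. -/
def WeakStarNull {X : Type*} [NormedAddCommGroup X] [NormedSpace ℝ X]
    (u : ℕ → StrongDual ℝ X) : Prop :=
  Filter.Tendsto (fun n => StrongDual.toWeakDual (u n)) Filter.atTop
    (nhds (0 : WeakDual ℝ X))

section

variable {X : Type*} [NormedAddCommGroup X] [NormedSpace ℝ X]

namespace WeakStarNull

variable {u : ℕ → StrongDual ℝ X}

theorem const_smul (hu : WeakStarNull u) (c : ℝ) : WeakStarNull fun n => c • u n := by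
  simpa [WeakStarNull] using Filter.Tendsto.const_smul hu c

theorem neg (hu : WeakStarNull u) : WeakStarNull fun n => -u n := by
  simpa [WeakStarNull] using Filter.Tendsto.neg hu

end WeakStarNull

theorem weakStarNull_sub_iff {w : ℕ → StrongDual ℝ X} {x : StrongDual ℝ X} :
    WeakStarNull (fun n => w n - x) ↔
      Tendsto (fun n => StrongDual.toWeakDual (w n)) atTop (𝓝 (StrongDual.toWeakDual x)) := by
  simp only [WeakStarNull, map_sub]
  exact tendsto_sub_nhds_zero_iff

theorem mem_szlenkDeriv_of_weakStarNull {ε : ℝ} {x : StrongDual ℝ X} {u : ℕ → StrongDual ℝ X}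
    (hu : WeakStarNull u) (hε : ∀ n, ε / 2 < ‖u n‖) (hadd : ∀ n, ‖x + u n‖ ≤ 1)
    (hsub : ∀ n, ‖x - u n‖ ≤ 1) : x ∈ szlenkDeriv X ε := by
  refine ⟨?_, fun V hV hxV => ?_⟩
  · have h := norm_add_le (x + u 0) (x - u 0)
    rw [show x + u 0 + (x - u 0) = (2 : ℝ) • x by module, norm_smul, Real.norm_two] at h
    linarith [hadd 0, hsub 0]
  have hV : StrongDual.toWeakDual '' V ∈ 𝓝 (StrongDual.toWeakDual x) :=
    hV.mem_nhds (Set.mem_image_of_mem _ hxV)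
  have hmem : ∀ᶠ n in atTop, x + u n ∈ V ∧ x - u n ∈ V := by
    have hplus := (weakStarNull_sub_iff (w := fun n => x + u n) (x := x)).mp (by simpa using hu)
    have hminus := (weakStarNull_sub_iff (w := fun n => x - u n) (x := x)).mp
      (by simpa [sub_eq_add_neg] using hu.neg)
    filter_upwards [hplus hV, hminus hV] with n h₁ h₂
    exact ⟨StrongDual.toWeakDual.injective.mem_set_image.mp h₁,
      StrongDual.toWeakDual.injective.mem_set_image.mp h₂⟩
  obtain ⟨n, hn₁, hn₂⟩ := hmem.exists
  calc ε < ‖(2 : ℝ) • u n‖ := by rw [norm_smul, Real.norm_two]; linarith [hε n]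
    _ = dist (x + u n) (x - u n) := by rw [dist_eq_norm]; congr 1; module
    _ ≤ diam (closedBall 0 1 ∩ V) :=
      dist_le_diam_of_mem (isBounded_closedBall.subset Set.inter_subset_left)
        ⟨mem_closedBall_zero_iff.mpr (hadd n), hn₁⟩ ⟨mem_closedBall_zero_iff.mpr (hsub n), hn₂⟩

theorem exists_weakStarNull_of_mem_szlenkDeriv [TopologicalSpace.SeparableSpace X] {ε : ℝ}
    {v : StrongDual ℝ X} (hv : v ∈ szlenkDeriv X ε) :
    ∃ u : ℕ → StrongDual ℝ X, WeakStarNull u ∧ (∀ n, ε / 2 < ‖u n‖) ∧ ∀ n, ‖v + u n‖ ≤ 1 := by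
  set K : Set (WeakDual ℝ X) := WeakDual.toStrongDual ⁻¹' closedBall 0 1
  have : TopologicalSpace.MetrizableSpace K :=
    WeakDual.metrizable_of_isCompact ℝ X K (WeakDual.isCompact_closedBall 0 1)
  set T : Set K := {w | ε / 2 < ‖WeakDual.toStrongDual (w : WeakDual ℝ X) - v‖}
  have hvK : StrongDual.toWeakDual v ∈ K := by simpa [K] using hv.1
  have hcl : ⟨_, hvK⟩ ∈ closure T := by
    rw [mem_closure_iff_nhds]
    intro U hU
    obtain ⟨O', hO', hO'U⟩ := (mem_nhds_subtype _ _ _).mp hU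
    obtain ⟨O, hOO', hO, hvO⟩ := mem_nhds_iff.mp hO'
    set V : Set (StrongDual ℝ X) := StrongDual.toWeakDual ⁻¹' O
    have hdiam := hv.2 V (by rwa [Set.image_preimage_eq O StrongDual.toWeakDual.surjective]) hvO
    by_contra hUT
    have hsub : closedBall 0 1 ∩ V ⊆ closedBall v (ε / 2) := by
      rintro w ⟨hw, hwV⟩
      by_contra hwv
      have hwK : StrongDual.toWeakDual w ∈ K := hw
      refine hUT ⟨⟨_, hwK⟩, hO'U (hOO' hwV), ?_⟩
      show ε / 2 < ‖w - v‖
      simpa [dist_eq_norm] using hwv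
    have hε : 0 ≤ ε / 2 := by simpa using hsub ⟨mem_closedBall_zero_iff.mpr hv.1, hvO⟩
    linarith [diam_mono hsub isBounded_closedBall, diam_closedBall (x := v) hε]
  obtain ⟨w, hwT, hw⟩ := mem_closure_iff_seq_limit.mp hcl
  refine ⟨fun n => WeakDual.toStrongDual (w n : WeakDual ℝ X) - v,
    weakStarNull_sub_iff.mpr ?_, hwT, fun n => ?_⟩
  · exact (continuous_subtype_val.tendsto _).comp hw
  · rw [add_sub_cancel]
    exact mem_closedBall_zero_iff.mp (w n).2

theorem inv_smul_mem_szlenkDeriv {x : StrongDual ℝ X} {w : ℕ → StrongDual ℝ X} {c δ ε : ℝ}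
    (hc : 0 < c) (hεδ : ε * c = 2 * δ) (hw : WeakStarNull w) (hwδ : ∀ n, δ < ‖w n‖)
    (hadd : ∀ n, ‖x + w n‖ ≤ c) (hsub : ∀ n, ‖x - w n‖ ≤ c) : c⁻¹ • x ∈ szlenkDeriv X ε := by
  have hnorm (z : StrongDual ℝ X) : ‖c⁻¹ • z‖ = c⁻¹ * ‖z‖ := by
    rw [norm_smul, norm_inv, Real.norm_of_nonneg hc.le]
  have hscale (z : StrongDual ℝ X) (hz : ‖z‖ ≤ c) : ‖c⁻¹ • z‖ ≤ 1 := by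
    rwa [hnorm, inv_mul_le_one₀ hc]
  refine mem_szlenkDeriv_of_weakStarNull (hw.const_smul c⁻¹) (fun n => ?_)
    (fun n => by simpa only [smul_add] using hscale _ (hadd n))
    (fun n => by simpa only [smul_sub] using hscale _ (hsub n))
  rw [hnorm, lt_inv_mul_iff₀ hc]
  linarith [hwδ n]

theorem inv_smul_notMem_szlenkDeriv [TopologicalSpace.SeparableSpace X] {y : StrongDual ℝ X}
    {c δ ε : ℝ} (hc : 0 < c) (hεδ : ε * c = 2 * δ)
    (hy : ∀ u : ℕ → StrongDual ℝ X, WeakStarNull u → (∀ n, δ < ‖u n‖) → ∃ m, c < ‖y + u m‖) :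
    c⁻¹ • y ∉ szlenkDeriv X ε := by
  intro hmem
  obtain ⟨u, hu, huε, hu1⟩ := exists_weakStarNull_of_mem_szlenkDeriv hmem
  obtain ⟨m, hm⟩ := hy _ (hu.const_smul c) fun n => by
    rw [norm_smul, Real.norm_of_nonneg hc.le]
    nlinarith [huε n]
  have hle : ‖y + c • u m‖ ≤ c :=
    calc ‖y + c • u m‖ = ‖c • (c⁻¹ • y + u m)‖ := by rw [smul_add, smul_inv_smul₀ hc.ne']
      _ = c * ‖c⁻¹ • y + u m‖ := by rw [norm_smul, Real.norm_of_nonneg hc.le]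
      _ ≤ c := mul_le_of_le_one_right hc.le (hu1 m)
  exact hm.not_ge hle

end

theorem exists_pos_mul_add_eq_two_mul {ψ : ℝ → ℝ} (hcont : ContinuousOn ψ (Set.Ioi 0))
    (hnonneg : ∀ t > 0, 0 ≤ ψ t) (hlt : ∀ t > 0, ψ t < t) {ε r : ℝ} (hε : ε ∈ Set.Ioo 0 2)
    (hr : 0 < r) : ∃ δ > 0, ε * (r + ψ δ) = 2 * δ := by
  obtain ⟨hε0, hε2⟩ := hε
  set a := ε * r / 4 with ha_def
  set b := ε * r / (2 - ε)
  have ha : 0 < a := by positivity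
  have hab : a ≤ b := div_le_div_of_nonneg_left (by positivity) (by linarith) (by linarith)
  have hsub : Set.Icc a b ⊆ Set.Ioi 0 := fun t ht => ha.trans_le ht.1
  have hfa : 2 * a ≤ ε * (r + ψ a) := by
    nlinarith [mul_nonneg hε0.le (hnonneg a ha), mul_pos hε0 hr]
  have hfb : ε * (r + ψ b) ≤ 2 * b := by
    have hb : (2 - ε) * b = ε * r := mul_div_cancel₀ _ (by linarith)
    nlinarith [hlt b (ha.trans_le hab)]
  obtain ⟨δ, hδ, hδeq⟩ := intermediate_value_Icc' hab
    ((continuousOn_const.mul (continuousOn_const.add (hcont.mono hsub))).sub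
      (continuousOn_const.mul continuousOn_id)) (show (0 : ℝ) ∈ Set.Icc _ _ from
        ⟨sub_nonpos.mpr hfb, sub_nonneg.mpr hfa⟩)
  exact ⟨δ, hsub hδ, sub_eq_zero.mp hδeq⟩

theorem szlenkDeriv_not_ball_of_test_general (X : Type*) [NormedAddCommGroup X]
    [NormedSpace ℝ X] [TopologicalSpace.SeparableSpace X]
    (x₀ y₀ : StrongDual ℝ X) (r : ℝ) (hr : 0 < r)
    (hx₀ : ‖x₀‖ = r) (hy₀ : ‖y₀‖ = r)
    (φ ψ : ℝ → ℝ)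
    (hψcont : ContinuousOn ψ (Set.Ioi (0 : ℝ)))
    (hψpos : ∀ δ > (0 : ℝ), 0 < ψ δ)
    (hψlt : ∀ δ > (0 : ℝ), ψ δ < min δ (φ δ))
    (hi : ∀ δ > (0 : ℝ), ∃ v : ℕ → StrongDual ℝ X, WeakStarNull v ∧
      (∀ n, δ < ‖v n‖) ∧ (∀ n, ‖x₀ + v n‖ ≤ r + ψ δ) ∧ (∀ n, ‖x₀ - v n‖ ≤ r + ψ δ))
    (hii : ∀ δ > (0 : ℝ), ∀ u : ℕ → StrongDual ℝ X, WeakStarNull u →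
      (∀ n, δ < ‖u n‖) → ∃ m, r + φ δ ≤ ‖y₀ + u m‖) :
    ∀ ε ∈ Set.Ioo (0 : ℝ) 2,
      (∃ u v : StrongDual ℝ X, ‖u‖ = ‖v‖ ∧
        u ∈ szlenkDeriv X ε ∧ v ∉ szlenkDeriv X ε) ∧
      ∀ ρ : ℝ, szlenkDeriv X ε ≠ Metric.closedBall (0 : StrongDual ℝ X) ρ := by
  intro ε hε
  obtain ⟨δ, hδ, hεδ⟩ := exists_pos_mul_add_eq_two_mul hψcont (fun t ht => (hψpos t ht).le)
    (fun t ht => (hψlt t ht).trans_le (min_le_left _ _)) hε hr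
  set c := r + ψ δ
  have hc : 0 < c := by linarith [hψpos δ hδ]
  have hφ : c < r + φ δ := by linarith [(hψlt δ hδ).trans_le (min_le_right _ _)]
  obtain ⟨w, hw, hwδ, hadd, hsub⟩ := hi δ hδ
  have hu : c⁻¹ • x₀ ∈ szlenkDeriv X ε := inv_smul_mem_szlenkDeriv hc hεδ hw hwδ hadd hsub
  have hv : c⁻¹ • y₀ ∉ szlenkDeriv X ε := inv_smul_notMem_szlenkDeriv hc hεδ fun u hu huδ =>
    (hii δ hδ u hu huδ).imp fun _ hm => hφ.trans_le hm
  have hnorm_eq : ‖c⁻¹ • x₀‖ = ‖c⁻¹ • y₀‖ := by rw [norm_smul, norm_smul, hx₀, hy₀]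
  refine ⟨⟨_, _, hnorm_eq, hu, hv⟩, fun ρ hρ => hv ?_⟩
  rw [hρ, mem_closedBall_zero_iff, ← hnorm_eq, ← mem_closedBall_zero_iff, ← hρ]
  exact hu

theorem szlenkDeriv_not_ball_of_test (X : Type*) [NormedAddCommGroup X]
    [NormedSpace ℝ X] [CompleteSpace X] [TopologicalSpace.SeparableSpace X]
    (x₀ y₀ : StrongDual ℝ X) (r : ℝ) (hr : 0 < r)
    (hx₀ : ‖x₀‖ = r) (hy₀ : ‖y₀‖ = r)
    (φ ψ : ℝ → ℝ)
    (hφcont : ContinuousOn φ (Set.Ioi (0 : ℝ))) (hψcont : ContinuousOn ψ (Set.Ioi (0 : ℝ)))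
    (hφpos : ∀ δ > (0 : ℝ), 0 < φ δ) (hψpos : ∀ δ > (0 : ℝ), 0 < ψ δ)
    (hψlt : ∀ δ > (0 : ℝ), ψ δ < min δ (φ δ))
    (hi : ∀ δ > (0 : ℝ), ∃ v : ℕ → StrongDual ℝ X, WeakStarNull v ∧
      (∀ n, δ < ‖v n‖) ∧ (∀ n, ‖x₀ + v n‖ ≤ r + ψ δ) ∧ (∀ n, ‖x₀ - v n‖ ≤ r + ψ δ))
    (hii : ∀ δ > (0 : ℝ), ∀ u : ℕ → StrongDual ℝ X, WeakStarNull u →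
      (∀ n, δ < ‖u n‖) → ∃ m, r + φ δ ≤ ‖y₀ + u m‖) :
    ∀ ε ∈ Set.Ioo (0 : ℝ) 2,
      (∃ u v : StrongDual ℝ X, ‖u‖ = ‖v‖ ∧
        u ∈ szlenkDeriv X ε ∧ v ∉ szlenkDeriv X ε) ∧
      ∀ ρ : ℝ, szlenkDeriv X ε ≠ Metric.closedBall (0 : StrongDual ℝ X) ρ :=
  szlenkDeriv_not_ball_of_test_general X x₀ y₀ r hr hx₀ hy₀ φ ψ hψcont hψpos hψlt hi hii
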